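/- Let G be a connected plane graph with minimum degree at least 3 that contains no cycle of length 4, no cycle of length 7, no cycle of length 9, and no 5-cycle normally adjacent to a 3-cycle. Then no 3-face of G is adjacent to a 5-face of G. -/

import Mathlib

namespace Paper

open SimpleGraph

variable {V : Type*}

/-- The fixed-point-free involution on darts reversing each dart. -/
def dartFlip (G : SimpleGraph V) : Equiv.Perm G.Dart :=
  ⟨SimpleGraph.Dart.symm, SimpleGraph.Dart.symm,
    fun d => SimpleGraph.Dart.symm_symm d, fun d => SimpleGraph.Dart.symm_symm d⟩

/-- A combinatorial embedding (rotation system) of a simple graph: a permutation of the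
darts whose cycles are exactly the sets of darts emanating from a common vertex. -/
structure PlaneEmbedding (G : SimpleGraph V) where
  rot : Equiv.Perm G.Dart
  fst_rot : ∀ d : G.Dart, (rot d).fst = d.fst
  rot_cyclic : ∀ d e : G.Dart, d.fst = e.fst → rot.SameCycle d e

/-- The face permutation of a combinatorial embedding; its orbits are the (boundary walks
of the) faces of the embedding. -/
def PlaneEmbedding.facePerm {G : SimpleGraph V} (E : PlaneEmbedding G) : Equiv.Perm G.Dart :=
  E.rot * dartFlip G

/-- The face (as its set of boundary darts, i.e. the orbit of the face permutation)
containing a given dart. -/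
def faceOf {G : SimpleGraph V} (E : PlaneEmbedding G) (d : G.Dart) : Set G.Dart :=
  {e | E.facePerm.SameCycle d e}

/-- The length of the boundary walk of the face containing a given dart; a `k`-face is a
face whose boundary walk has length `k`, i.e. whose dart-orbit has size `k`. -/
noncomputable def faceSize {G : SimpleGraph V} (E : PlaneEmbedding G) (d : G.Dart) : ℕ :=
  (faceOf E d).ncard

/-- The number of faces of the embedding lying in a given connected component. -/
noncomputable def componentFaceCount {G : SimpleGraph V} (E : PlaneEmbedding G)
    (c : G.ConnectedComponent) : ℕ :=
  Nat.card (Quotient (Setoid.comap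
    (Subtype.val : {d : G.Dart // G.connectedComponentMk d.fst = c} → G.Dart)
    (Equiv.Perm.SameCycle.setoid E.facePerm)))

/-- The embedding is plane (genus zero): Euler's formula `V - E + F = 2` holds on each
connected component containing an edge (stated as `2V + 2F = #darts + 4`, using that the
number of darts is twice the number of edges). -/
def PlaneEmbedding.IsPlane {G : SimpleGraph V} (E : PlaneEmbedding G) : Prop :=
  ∀ c : G.ConnectedComponent, (∃ d : G.Dart, G.connectedComponentMk d.fst = c) →
    2 * {v : V | G.connectedComponentMk v = c}.ncard + 2 * componentFaceCount E c
      = {d : G.Dart | G.connectedComponentMk d.fst = c}.ncard + 4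

/-- `G` is a planar graph: it admits a plane (genus-zero) combinatorial embedding. -/
def IsPlanar (G : SimpleGraph V) : Prop :=
  ∃ E : PlaneEmbedding G, E.IsPlane

/-- `G` has no cycle of length `n`. -/
def NoCycleLen (G : SimpleGraph V) (n : ℕ) : Prop :=
  ∀ (v : V) (c : G.Walk v v), c.IsCycle → c.length ≠ n

/-- Two cycles (given as closed walks) are normally adjacent: their intersection is
isomorphic to `K₂`, i.e. they share exactly one edge together with its two endpoints. -/
def NormAdjWalks (G : SimpleGraph V) {a b : V} (c₁ : G.Walk a a) (c₂ : G.Walk b b) : Prop :=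
  ∃ x y : V, x ≠ y ∧ s(x, y) ∈ c₁.edges ∧ s(x, y) ∈ c₂.edges ∧
    (∀ z : V, (z ∈ c₁.support ∧ z ∈ c₂.support) ↔ (z = x ∨ z = y))

/-- `G` has no `5`-cycle normally adjacent to a `3`-cycle. -/
def No5CycleNormAdj3 (G : SimpleGraph V) : Prop :=
  ∀ (a b : V) (c₁ : G.Walk a a) (c₂ : G.Walk b b),
    c₁.IsCycle → c₁.length = 5 → c₂.IsCycle → c₂.length = 3 →
      ¬ NormAdjWalks G c₁ c₂

/-- `d` lists the boundary darts of a face in order, and this boundary is the closed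
walk `v 0, v 1, …, v (n-1), v 0`. -/
def FaceTraversal {G : SimpleGraph V} (E : PlaneEmbedding G) {n : ℕ}
    (v : ZMod n → V) (d : ZMod n → G.Dart) : Prop :=
  (∀ i, (d i).toProd = (v i, v (i + 1))) ∧ ∀ i, E.facePerm (d i) = d (i + 1)

/-- The cycle `v 0, v 1, …, v (n-1), v 0` (with distinct vertices) bounds a face of the
embedding (traversed in one of the two possible directions). -/
def CycleBoundsFace {G : SimpleGraph V} (E : PlaneEmbedding G) {n : ℕ}
    (v : ZMod n → V) : Prop :=
  Function.Injective v ∧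
    ((∃ d, FaceTraversal E v d) ∨ (∃ d, FaceTraversal E (fun i => v (-i)) d))

/-- The `i`-th vertex of the boundary walk of the face containing the dart `d0`. -/
def boundaryVert {G : SimpleGraph V} (E : PlaneEmbedding G) (d0 : G.Dart) (i : ℕ) : V :=
  ((E.facePerm ^ i) d0).fst

/-- The faces containing the darts `d1`, `d2` are adjacent: their boundaries share at
least one edge. -/
def FacesAdjacent {G : SimpleGraph V} (E : PlaneEmbedding G) (d1 d2 : G.Dart) : Prop :=
  ∃ e1 e2 : G.Dart, E.facePerm.SameCycle d1 e1 ∧ E.facePerm.SameCycle d2 e2 ∧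
    e1.edge = e2.edge

/-- The set of vertices on the boundary of the face containing the dart `d`. -/
def faceVerts {G : SimpleGraph V} (E : PlaneEmbedding G) (d : G.Dart) : Set V :=
  {x | ∃ e : G.Dart, E.facePerm.SameCycle d e ∧ e.fst = x}

/-- The set of edges on the boundary of the face containing the dart `d`. -/
def faceEdges {G : SimpleGraph V} (E : PlaneEmbedding G) (d : G.Dart) : Set (Sym2 V) :=
  {s | ∃ e : G.Dart, E.facePerm.SameCycle d e ∧ e.edge = s}

section Configs

variable [Fintype V]

/-- Configuration (1): a `10`-cycle bounding a face together with a `3`-cycle bounding a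
face, normally adjacent to it along one edge, all eleven vertices having degree `3`. -/
def Config1 (G : SimpleGraph V) [DecidableRel G.Adj] (E : PlaneEmbedding G) : Prop :=
  ∃ (v : ZMod 10 → V) (w : ZMod 3 → V) (u : V),
    CycleBoundsFace E v ∧ CycleBoundsFace E w ∧
    ({w 0, w 1, w 2} : Set V) = {v 0, v 1, u} ∧ u ∉ Set.range v ∧
    (∀ i, G.degree (v i) = 3) ∧ G.degree u = 3

/-- Configuration (2): two vertex-disjoint `10`-cycles `x₁…x₁₀` and `y₁…y₁₀` (indexed here
from `0`), each bounding a face, with edges `x₃y₃` and `x₁₀y₁₀`; all `xᵢ` have degree `3`,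
`y₃` and `y₁₀` have degree `4`, the other `yᵢ` have degree `3`. -/
def Config2 (G : SimpleGraph V) [DecidableRel G.Adj] (E : PlaneEmbedding G) : Prop :=
  ∃ x y : ZMod 10 → V,
    CycleBoundsFace E x ∧ CycleBoundsFace E y ∧
    Set.range x ∩ Set.range y = ∅ ∧
    G.Adj (x 2) (y 2) ∧ G.Adj (x 9) (y 9) ∧
    (∀ i, G.degree (x i) = 3) ∧
    G.degree (y 2) = 4 ∧ G.degree (y 9) = 4 ∧
    (∀ i, i ≠ 2 → i ≠ 9 → G.degree (y i) = 3)

/-- Configuration (3): an `8`-cycle bounding a face and a `5`-cycle bounding a face that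
are normally adjacent (sharing exactly one edge and its endpoints), all eleven vertices
having degree `3`. -/
def Config3 (G : SimpleGraph V) [DecidableRel G.Adj] (E : PlaneEmbedding G) : Prop :=
  ∃ (a : ZMod 8 → V) (b : ZMod 5 → V),
    CycleBoundsFace E a ∧ CycleBoundsFace E b ∧
    Set.range a ∩ Set.range b = {a 0, a 1} ∧
    (∃ j : ZMod 5, (b j = a 0 ∧ b (j + 1) = a 1) ∨ (b j = a 1 ∧ b (j + 1) = a 0)) ∧
    (∀ i, G.degree (a i) = 3) ∧ (∀ j, G.degree (b j) = 3)

end Configs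

open Classical in
/-- The function resulting from the operation `Delete_[u](G, f)`: every neighbour of `u`
loses one unit. -/
noncomputable def deleteFun (G : SimpleGraph V) (u : V) (f : V → ℤ) : V → ℤ :=
  fun v => if G.Adj u v then f v - 1 else f v

open Classical in
/-- The function resulting from the operation `DeleteSave_[u; w](G, f)`: every neighbour
of `u` except `w` loses one unit. -/
noncomputable def deleteSaveFun (G : SimpleGraph V) (u w : V) (f : V → ℤ) : V → ℤ :=
  fun v => if G.Adj u v ∧ v ≠ w then f v - 1 else f v

/-- All vertices of the subgraph of `G` induced on `S` can be removed by a sequence of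
legal applications of the `Delete` and `DeleteSave` operations, starting from the value
function `f`. -/
inductive WeaklyReducible (G : SimpleGraph V) : Set V → (V → ℤ) → Prop
  | empty (f : V → ℤ) : WeaklyReducible G ∅ f
  | delete (S : Set V) (f : V → ℤ) (u : V) (hu : u ∈ S)
      (hnn : ∀ v ∈ S \ {u}, 0 ≤ deleteFun G u f v)
      (h : WeaklyReducible G (S \ {u}) (deleteFun G u f)) : WeaklyReducible G S f
  | deleteSave (S : Set V) (f : V → ℤ) (u w : V) (hu : u ∈ S) (hw : w ∈ S \ {u})
      (hadj : G.Adj u w) (hlt : f w < f u)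
      (hnn : ∀ v ∈ S \ {u}, 0 ≤ deleteSaveFun G u w f v)
      (h : WeaklyReducible G (S \ {u}) (deleteSaveFun G u w f)) : WeaklyReducible G S f

/-- `G` is weakly `d`-degenerate: all its vertices can be removed by a sequence of legal
applications of the `Delete` and `DeleteSave` operations, starting from the constant
function of value `d`. -/
def WeaklyDegenerate (G : SimpleGraph V) (d : ℤ) : Prop :=
  WeaklyReducible G Set.univ (fun _ => d)

/-- The canonical cover of `G` with `s = 2`: two disjoint copies of `G`, on vertex set
`V × Fin 2`, with `(u, i)` adjacent to `(v, j)` iff `uv ∈ E(G)` and `i = j`. -/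
def canonicalCover2 (G : SimpleGraph V) : SimpleGraph (V × Fin 2) where
  Adj a b := G.Adj a.1 b.1 ∧ a.2 = b.2
  symm := ⟨fun _ _ h => ⟨h.1.symm, h.2.symm⟩⟩
  loopless := ⟨fun a h => G.loopless.irrefl a.1 h.1⟩

/-- `T` is a strictly `f`-degenerate transversal-candidate set: every nonempty subgraph
`K` of the induced subgraph `H[T]` has a vertex `x` with `deg_K x < f x`. -/
def StrictlyFDegenerateOn {W : Type*} (H : SimpleGraph W) (f : W → ℕ) (T : Set W) : Prop :=
  ∀ K : H.Subgraph, K.verts ⊆ T → K.verts.Nonempty →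
    ∃ x ∈ K.verts, Nat.card (K.neighborSet x) < f x

end Paper

/-!
Minimum degree at least 2 means that the rotation fixes no dart, so boundary walks of faces
never turn back along the edge they arrived on. The boundary of a 5-face is then a 5-cycle and
that of an adjacent 3-face a triangle on one of its edges. The apex of the triangle cannot lie
on the pentagon, since it would close a 4-cycle with it; so the two cycles are normally adjacent.
-/

namespace Paper

open SimpleGraph

variable {V : Type*} {G : SimpleGraph V}

lemma isCycle_cons3 {a b c : V} (hab : G.Adj a b) (hbc : G.Adj b c) (hca : G.Adj c a) :
    (Walk.cons hab (Walk.cons hbc (Walk.cons hca Walk.nil))).IsCycle := by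
  have := hab.ne; have := hbc.ne; have := hca.ne
  simp [Walk.cons_isCycle_iff, Walk.cons_isPath_iff]
  aesop

lemma isCycle_cons4 {a b c d : V} (hab : G.Adj a b) (hbc : G.Adj b c) (hcd : G.Adj c d)
    (hda : G.Adj d a) (hac : a ≠ c) (hbd : b ≠ d) :
    (Walk.cons hab (Walk.cons hbc (Walk.cons hcd (Walk.cons hda Walk.nil)))).IsCycle := by
  have := hab.ne; have := hbc.ne; have := hcd.ne; have := hda.ne
  simp [Walk.cons_isCycle_iff, Walk.cons_isPath_iff]
  aesop

lemma isCycle_cons5 {a b c d e : V} (hab : G.Adj a b) (hbc : G.Adj b c) (hcd : G.Adj c d)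
    (hde : G.Adj d e) (hea : G.Adj e a) (hac : a ≠ c) (had : a ≠ d) (hbd : b ≠ d)
    (hbe : b ≠ e) (hce : c ≠ e) :
    (Walk.cons hab (Walk.cons hbc (Walk.cons hcd (Walk.cons hde
      (Walk.cons hea Walk.nil))))).IsCycle := by
  have := hab.ne; have := hbc.ne; have := hcd.ne; have := hde.ne; have := hea.ne
  simp [Walk.cons_isCycle_iff, Walk.cons_isPath_iff]
  aesop

lemma not_adj_adj_of_pentagon (h4 : NoCycleLen G 4) (h53 : No5CycleNormAdj3 G) {b : ℕ → V}
    (hadj : ∀ i, G.Adj (b i) (b (i + 1))) (hne : ∀ i, b i ≠ b (i + 2))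
    (hper : ∀ i, b (i + 5) = b i) (a : V) :
    ¬ (G.Adj (b 0) a ∧ G.Adj a (b 1)) := by
  rintro ⟨ha₀, ha₁⟩
  have h₀₁ := hadj 0; have h₁₂ := hadj 1; have h₂₃ := hadj 2; have h₃₄ := hadj 3
  have h₄₀ : G.Adj (b 4) (b 0) := hper 0 ▸ hadj 4
  have n₀₂ := hne 0; have n₁₃ := hne 1; have n₂₄ := hne 2
  have n₃₀ : b 3 ≠ b 0 := hper 0 ▸ hne 3
  have n₄₁ : b 4 ≠ b 1 := hper 1 ▸ hne 4
  by_cases ha₂ : a = b 2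
  · subst ha₂
    exact h4 _ _ (isCycle_cons4 ha₀ h₂₃ h₃₄ h₄₀ n₃₀.symm n₂₄) rfl
  by_cases ha₃ : a = b 3
  · subst ha₃
    exact h4 _ _ (isCycle_cons4 h₀₁ ha₁.symm h₃₄ h₄₀ n₃₀.symm n₄₁.symm) rfl
  by_cases ha₄ : a = b 4
  · subst ha₄
    exact h4 _ _ (isCycle_cons4 h₁₂ h₂₃ h₃₄ ha₁ n₁₃ n₂₄) rfl
  refine h53 _ _ _ _ (isCycle_cons5 h₀₁ h₁₂ h₂₃ h₃₄ h₄₀ n₀₂ n₃₀.symm n₁₃ n₄₁.symm n₂₄) rfl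
    (isCycle_cons3 ha₀ ha₁ h₀₁.symm) rfl ⟨b 0, b 1, h₀₁.ne, by simp, by simp [Sym2.eq_swap], ?_⟩
  have := ha₀.ne; have := ha₁.ne
  simp only [Walk.support_cons, Walk.support_nil, List.mem_cons, List.not_mem_nil, or_false]
  aesop

namespace PlaneEmbedding

variable (E : PlaneEmbedding G)

lemma facePerm_fst (d : G.Dart) : (E.facePerm d).fst = d.snd :=
  E.fst_rot _

lemma facePerm_ne_self (d : G.Dart) : E.facePerm d ≠ d := by
  intro h
  have := E.facePerm_fst d
  rw [h] at this
  exact d.adj.ne this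

lemma rot_ne_self [Fintype V] [DecidableRel G.Adj] {d : G.Dart} (hd : 2 ≤ G.degree d.fst) :
    E.rot d ≠ d := by
  intro hfix
  have hall : ∀ e : G.Dart, e.fst = d.fst → e = d := fun e he => by
    obtain ⟨n, rfl⟩ := E.rot_cyclic d e he.symm
    exact Function.IsFixedPt.perm_zpow hfix n
  have hsub : G.neighborFinset d.fst ⊆ {d.snd} := fun v hv => by
    rw [mem_neighborFinset] at hv
    simp [← congrArg (fun e : G.Dart => e.snd) (hall ⟨(d.fst, v), hv⟩ rfl)]
  have := Finset.card_le_card hsub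
  rw [card_neighborFinset_eq_degree, Finset.card_singleton] at this
  omega

lemma facePerm_ne_symm [Fintype V] [DecidableRel G.Adj] {d : G.Dart}
    (hd : 2 ≤ G.degree d.snd) : E.facePerm d ≠ d.symm :=
  E.rot_ne_self (d := d.symm) hd

lemma faceSize_eq_of_sameCycle {d e : G.Dart} (h : E.facePerm.SameCycle d e) :
    faceSize E d = faceSize E e := by
  simp only [faceSize, faceOf]
  congr 1
  ext x
  exact ⟨h.symm.trans, h.trans⟩

lemma pow_faceSize_apply [Fintype V] (d : G.Dart) : (E.facePerm ^ faceSize E d) d = d := by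
  classical
  have hd : d ∈ E.facePerm.support := Equiv.Perm.mem_support.2 (E.facePerm_ne_self d)
  have hsize : faceSize E d = (E.facePerm.cycleOf d).support.card := by
    rw [faceSize, ← Set.ncard_coe_finset]
    congr 1
    ext e
    rw [Finset.mem_coe, Equiv.Perm.mem_support_cycleOf_iff]
    exact (and_iff_left hd).symm
  simpa [← hsize] using (E.facePerm.pow_mod_card_support_cycleOf_self_apply (faceSize E d) d).symm

end PlaneEmbedding

section BoundaryVert

variable (E : PlaneEmbedding G)

lemma boundaryVert_zero (d : G.Dart) : boundaryVert E d 0 = d.fst := rfl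

lemma snd_facePerm_pow (d : G.Dart) (i : ℕ) :
    ((E.facePerm ^ i) d).snd = boundaryVert E d (i + 1) := by
  rw [boundaryVert, pow_succ', Equiv.Perm.mul_apply, E.facePerm_fst]

lemma boundaryVert_one (d : G.Dart) : boundaryVert E d 1 = d.snd :=
  (snd_facePerm_pow E d 0).symm

lemma boundaryVert_adj (d : G.Dart) (i : ℕ) :
    G.Adj (boundaryVert E d i) (boundaryVert E d (i + 1)) :=
  snd_facePerm_pow E d i ▸ ((E.facePerm ^ i) d).adj

lemma boundaryVert_add_faceSize [Fintype V] (d : G.Dart) (i : ℕ) :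
    boundaryVert E d (i + faceSize E d) = boundaryVert E d i := by
  rw [boundaryVert, pow_add, Equiv.Perm.mul_apply, E.pow_faceSize_apply, boundaryVert]

lemma boundaryVert_ne_add_two [Fintype V] [DecidableRel G.Adj] (hdeg : ∀ v, 2 ≤ G.degree v)
    (d : G.Dart) (i : ℕ) : boundaryVert E d i ≠ boundaryVert E d (i + 2) := by
  intro h
  set e := (E.facePerm ^ i) d
  apply E.facePerm_ne_symm (hdeg e.snd)
  apply Dart.toProd_injective
  ext
  · exact E.facePerm_fst e
  · rw [← Equiv.Perm.mul_apply, ← pow_succ', snd_facePerm_pow]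
    exact h.symm

end BoundaryVert

end Paper

open SimpleGraph

theorem statement16_general {V : Type*} [Fintype V] (G : SimpleGraph V) [DecidableRel G.Adj]
    (E : Paper.PlaneEmbedding G)
    (hmin : ∀ v : V, 3 ≤ G.degree v)
    (h4 : Paper.NoCycleLen G 4) (h53 : Paper.No5CycleNormAdj3 G) :
    ∀ d1 d2 : G.Dart, Paper.faceSize E d1 = 3 → Paper.faceSize E d2 = 5 →
      ¬ Paper.FacesAdjacent E d1 d2 := by
  rintro d1 d2 h₃ h₅ ⟨e₁, e₂, he₁, he₂, hedge⟩
  rw [E.faceSize_eq_of_sameCycle he₁] at h₃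
  rw [E.faceSize_eq_of_sameCycle he₂] at h₅
  rcases (dart_edge_eq_iff e₁ e₂).1 hedge with rfl | rfl
  · omega
  -- The 3-face is a triangle on the edge `e₂` of the pentagon bounding the 5-face.
  have hdeg : ∀ v, 2 ≤ G.degree v := fun v => (hmin v).trans' (by norm_num)
  refine Paper.not_adj_adj_of_pentagon h4 h53 (Paper.boundaryVert_adj E e₂)
    (Paper.boundaryVert_ne_add_two E hdeg e₂)
    (fun i => h₅ ▸ Paper.boundaryVert_add_faceSize E e₂ i) (Paper.boundaryVert E e₂.symm 2)
    ⟨?_, ?_⟩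
  · simpa [Paper.boundaryVert_zero, Paper.boundaryVert_one] using
      Paper.boundaryVert_adj E e₂.symm 1
  · have hclosed := Paper.boundaryVert_add_faceSize E e₂.symm 0
    rw [h₃, zero_add, Paper.boundaryVert_zero] at hclosed
    simpa [hclosed, Paper.boundaryVert_one] using Paper.boundaryVert_adj E e₂.symm 2

/-- No 3-face is adjacent to a 5-face. -/
theorem statement16 {V : Type*} [Fintype V] (G : SimpleGraph V) [DecidableRel G.Adj]
    (hconn : G.Connected)
    (E : Paper.PlaneEmbedding G) (hE : E.IsPlane)
    (hmin : ∀ v : V, 3 ≤ G.degree v)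
    (h4 : Paper.NoCycleLen G 4) (h7 : Paper.NoCycleLen G 7)
    (h9 : Paper.NoCycleLen G 9) (h53 : Paper.No5CycleNormAdj3 G) :
    ∀ d1 d2 : G.Dart, Paper.faceSize E d1 = 3 → Paper.faceSize E d2 = 5 →
      ¬ Paper.FacesAdjacent E d1 d2 :=
  statement16_general G E hmin h4 h53
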